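/- (Unbiasedness of the doubly robust off-policy evaluation influence function in MDPs.) The doubly robust OPE functional has mean equal to the policy value: E_{p_{π^b}}[ v_0(s_0) + ∑_{j=0}^H μ_j(s_j,a_j) · ( r_j + v_{j+1}(s_{j+1}) − q_j(s_j,a_j) ) ] = J(θ), where v_{H+1} ≡ 0. -/

import Mathlib

open Finset

noncomputable section

namespace OPPG

/-- The parameter space `ℝ^D`. -/
abbrev Param (D : ℕ) : Type := EuclideanSpace ℝ (Fin D)

/-- A trajectory `(s₀, a₀, r₀, …, s_H, a_H, r_H, s_{H+1})`. -/
abbrev Traj (S A R : Type) (H : ℕ) : Type :=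
  (Fin (H + 2) → S) × (Fin (H + 1) → A) × (Fin (H + 1) → R)

variable {S A R : Type} [Fintype S] [Fintype A] [Fintype R]
  [DecidableEq S] [DecidableEq A] [DecidableEq R] {H D : ℕ}

/-- Expectation of a (vector-valued) trajectory function under the density `p`. -/
def expec {E : Type*} [AddCommMonoid E] [Module ℝ E]
    (p : Traj S A R H → ℝ) (f : Traj S A R H → E) : E :=
  ∑ T, p T • f T

open Classical in
/-- Probability of the event `ev` under the density `p`. -/
def pr (p : Traj S A R H → ℝ) (ev : Traj S A R H → Prop) : ℝ :=
  ∑ T, if ev T then p T else 0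

open Classical in
/-- Conditional expectation of `f` given the event `ev`, under the density `p`. -/
def cexp {E : Type*} [AddCommMonoid E] [Module ℝ E]
    (p : Traj S A R H → ℝ) (ev : Traj S A R H → Prop) (f : Traj S A R H → E) : E :=
  (∑ T, if ev T then p T else 0)⁻¹ • ∑ T, if ev T then p T • f T else 0

/-- Conditional covariance matrix of the `ℝ^D`-valued `Y` given the event `ev`. -/
def ccov (p : Traj S A R H → ℝ) (ev : Traj S A R H → Prop)
    (Y : Traj S A R H → Param D) : Matrix (Fin D) (Fin D) ℝ :=
  Matrix.of fun i j =>
    cexp p ev (fun T => Y T i * Y T j) -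
      cexp p ev (fun T => Y T i) * cexp p ev (fun T => Y T j)

/-- Covariance matrix of the `ℝ^D`-valued trajectory function `Y` under `p`. -/
def covMatrix (p : Traj S A R H → ℝ) (Y : Traj S A R H → Param D) :
    Matrix (Fin D) (Fin D) ℝ :=
  Matrix.of fun i j =>
    expec p (fun T => Y T i * Y T j) -
      expec p (fun T => Y T i) * expec p (fun T => Y T j)

/-- Operator norm of a `D × D` real matrix (as an operator on Euclidean space). -/
def opNorm (M : Matrix (Fin D) (Fin D) ℝ) : ℝ :=
  ‖Matrix.toEuclideanCLM (𝕜 := ℝ) M‖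

/-- `∑_{k = j}^{H} r_k`. -/
def cumRew (rval : R → ℝ) (j : ℕ) (T : Traj S A R H) : ℝ :=
  ∑ k : Fin (H + 1), if j ≤ (k : ℕ) then rval (T.2.2 k) else 0

open Classical in
/-- The joint probability `p(s_j = s, a_j = a)` under the trajectory density `p`. -/
def jointProb (p : Traj S A R H → ℝ) (j : Fin (H + 1)) (s : S) (a : A) : ℝ :=
  ∑ T, if T.1 j.castSucc = s ∧ T.2.1 j = a then p T else 0

/-- A finite-horizon MDP model: initial distribution, transitions, rewards,
reward values, behavior policy and the parametric family of target policies. -/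
structure Model (S A R : Type) (H D : ℕ) where
  p0 : S → ℝ
  ptr : Fin (H + 1) → S → A → S → ℝ
  prew : Fin (H + 1) → S → A → R → ℝ
  rval : R → ℝ
  pib : Fin (H + 1) → S → A → ℝ
  pit : Param D → Fin (H + 1) → S → A → ℝ

namespace Model

variable (M : Model S A R H D)

/-- Trajectory density induced by a policy `pi`. -/
def traj (pi : Fin (H + 1) → S → A → ℝ) (T : Traj S A R H) : ℝ :=
  M.p0 (T.1 0) * ∏ t : Fin (H + 1),
    (pi t (T.1 t.castSucc) (T.2.1 t) * M.prew t (T.1 t.castSucc) (T.2.1 t) (T.2.2 t) *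
      M.ptr t (T.1 t.castSucc) (T.2.1 t) (T.1 t.succ))

/-- Trajectory density under the behavior policy. -/
def pb : Traj S A R H → ℝ := M.traj M.pib

/-- Trajectory density under the target policy `π^{θ'}`. -/
def pe (θ' : Param D) : Traj S A R H → ℝ := M.traj (M.pit θ')

/-- The `q`-function `q_j(s,a) = E_{π^{θ'}}[∑_{k≥j} r_k ∣ s_j = s, a_j = a]`. -/
def qfun (θ' : Param D) (j : Fin (H + 1)) (s : S) (a : A) : ℝ :=
  cexp (M.pe θ') (fun T => T.1 j.castSucc = s ∧ T.2.1 j = a) (cumRew M.rval (j : ℕ))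

/-- The `v`-function `v_j(s)`, with the convention `v_{H+1} ≡ 0`. -/
def vfun (θ' : Param D) (j : Fin (H + 2)) (s : S) : ℝ :=
  if (j : ℕ) ≤ H then cexp (M.pe θ') (fun T => T.1 j = s) (cumRew M.rval (j : ℕ)) else 0

/-- The marginal state–action density ratio `μ_j(s,a)`. -/
def mufun (θ' : Param D) (j : Fin (H + 1)) (s : S) (a : A) : ℝ :=
  jointProb (M.pe θ') j s a / jointProb M.pb j s a

/-- The policy score `g_t = ∇_θ log π^θ_t(a ∣ s)`. -/
def score (θ : Param D) (t : Fin (H + 1)) (s : S) (a : A) : Param D :=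
  gradient (fun θ' => Real.log (M.pit θ' t s a)) θ

/-- The policy score evaluated along a trajectory. -/
def scoreT (θ : Param D) (t : Fin (H + 1)) (T : Traj S A R H) : Param D :=
  M.score θ t (T.1 t.castSucc) (T.2.1 t)

/-- `d^q_j = ∇_θ q_j`. -/
def dq (θ : Param D) (j : Fin (H + 1)) (s : S) (a : A) : Param D :=
  gradient (fun θ' => M.qfun θ' j s a) θ

/-- `d^v_j = ∇_θ v_j` (so `d^v_{H+1} ≡ 0`). -/
def dv (θ : Param D) (j : Fin (H + 2)) (s : S) : Param D :=
  gradient (fun θ' => M.vfun θ' j s) θ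

/-- `d^μ_j = ∇_θ μ_j`. -/
def dmu (θ : Param D) (j : Fin (H + 1)) (s : S) (a : A) : Param D :=
  gradient (fun θ' => M.mufun θ' j s a) θ

/-- The single-step density ratio `ν̃_t` along a trajectory. -/
def nu (θ' : Param D) (t : Fin (H + 1)) (T : Traj S A R H) : ℝ :=
  M.pit θ' t (T.1 t.castSucc) (T.2.1 t) / M.pib t (T.1 t.castSucc) (T.2.1 t)

/-- The cumulative density ratio `ν_{0:k-1} = ∏_{t < k} ν̃_t` (so `nuUpto 0 = 1`). -/
def nuUpto (θ' : Param D) (k : ℕ) (T : Traj S A R H) : ℝ :=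
  ∏ t : Fin (H + 1), if (t : ℕ) < k then M.nu θ' t T else 1

/-- The cumulative density ratio `ν_{k:l} = ∏_{k ≤ t ≤ l} ν̃_t` (empty product is `1`). -/
def nuSeg (θ' : Param D) (k l : ℕ) (T : Traj S A R H) : ℝ :=
  ∏ t : Fin (H + 1), if k ≤ (t : ℕ) ∧ (t : ℕ) ≤ l then M.nu θ' t T else 1

/-- The policy value `J(θ') = E_{π^{θ'}}[∑_t r_t]`. -/
def Jval (θ' : Param D) : ℝ :=
  expec (M.pe θ') (fun T => ∑ t : Fin (H + 1), M.rval (T.2.2 t))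

/-- The policy gradient `Z(θ) = ∇_θ J(θ)`. -/
def Zval (θ : Param D) : Param D := gradient M.Jval θ

/-- `μ_{j-1}(s_{j-1}, a_{j-1})` along a trajectory, with the convention `μ_{-1} ≡ 1`. -/
def muPrev (θ : Param D) (j : Fin (H + 1)) (T : Traj S A R H) : ℝ :=
  if (j : ℕ) = 0 then 1 else
    let j' : Fin (H + 1) := ⟨(j : ℕ) - 1, by omega⟩
    M.mufun θ j' (T.1 j'.castSucc) (T.2.1 j')

/-- `d^μ_{j-1}(s_{j-1}, a_{j-1})` along a trajectory, with the convention `d^μ_{-1} ≡ 0`. -/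
def dmuPrev (θ : Param D) (j : Fin (H + 1)) (T : Traj S A R H) : Param D :=
  if (j : ℕ) = 0 then 0 else
    let j' : Fin (H + 1) := ⟨(j : ℕ) - 1, by omega⟩
    M.dmu θ j' (T.1 j'.castSucc) (T.2.1 j')

/-- The efficient influence function `ξ_MDP` (with mean `Z(θ)`). -/
def xiMDP (θ : Param D) (T : Traj S A R H) : Param D :=
  ∑ j : Fin (H + 1),
    ((M.rval (T.2.2 j) - M.qfun θ j (T.1 j.castSucc) (T.2.1 j)) •
        M.dmu θ j (T.1 j.castSucc) (T.2.1 j)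
      - M.mufun θ j (T.1 j.castSucc) (T.2.1 j) • M.dq θ j (T.1 j.castSucc) (T.2.1 j)
      + M.muPrev θ j T • M.dv θ j.castSucc (T.1 j.castSucc)
      + M.vfun θ j.castSucc (T.1 j.castSucc) • M.dmuPrev θ j T)

/-- The step-wise importance sampling integrand `∑_t ν_{0:t} r_t ∑_{s ≤ t} g_s`. -/
def stepIS (θ : Param D) (T : Traj S A R H) : Param D :=
  ∑ t : Fin (H + 1), (M.nuUpto θ ((t : ℕ) + 1) T * M.rval (T.2.2 t)) •
    ∑ s : Fin (H + 1), (if (s : ℕ) ≤ (t : ℕ) then M.scoreT θ s T else 0)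

end Model

/-- All the standing assumptions on the model: `p₀`, the transitions, and the reward
distributions are probability distributions; rewards are nonnegative; the behavior policy is
a positive probability distribution over actions; every target policy is a positive
probability distribution over actions; and all state–action marginals of the behavior
trajectory distribution are positive. -/
structure Model.Valid (M : Model S A R H D) : Prop where
  p0_nonneg : ∀ s, 0 ≤ M.p0 s
  p0_sum : ∑ s, M.p0 s = 1
  ptr_nonneg : ∀ t s a s', 0 ≤ M.ptr t s a s'
  ptr_sum : ∀ t s a, ∑ s', M.ptr t s a s' = 1
  prew_nonneg : ∀ t s a r, 0 ≤ M.prew t s a r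
  prew_sum : ∀ t s a, ∑ r, M.prew t s a r = 1
  rval_nonneg : ∀ r, 0 ≤ M.rval r
  pib_pos : ∀ t s a, 0 < M.pib t s a
  pib_sum : ∀ t s, ∑ a, M.pib t s a = 1
  pit_pos : ∀ θ' t s a, 0 < M.pit θ' t s a
  pit_sum : ∀ θ' t s, ∑ a, M.pit θ' t s a = 1
  pb_marg_pos : ∀ (j : Fin (H + 1)) (s : S) (a : A), 0 < jointProb M.pb j s a

end OPPG

namespace OPPG

variable {S A R : Type} [Fintype S] [Fintype A] [Fintype R]
  [DecidableEq S] [DecidableEq A] [DecidableEq R] {H D : ℕ}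

section DRAux

set_option linter.unusedSectionVars false

private lemma sum_update_aux {ι X : Type*} [Fintype ι] [DecidableEq ι] [Fintype X]
    (j : ι) (G : (ι → X) → ℝ) :
    ∑ g : ι → X, ∑ x : X, G (Function.update g j x)
      = (Fintype.card X : ℝ) * ∑ g : ι → X, G g := by
  have hinv : Function.Involutive
      (fun p : (ι → X) × X => (Function.update p.1 j p.2, p.1 j)) := by
    rintro ⟨g, x⟩
    simp [Function.update_idem]
  have key : ∑ p : (ι → X) × X, G (Function.update p.1 j p.2)
      = ∑ p : (ι → X) × X, G p.1 :=
    Fintype.sum_bijective _ hinv.bijective _ _ (fun p => rfl)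
  calc ∑ g : ι → X, ∑ x : X, G (Function.update g j x)
      = ∑ p : (ι → X) × X, G (Function.update p.1 j p.2) := by
        rw [Fintype.sum_prod_type]
    _ = ∑ p : (ι → X) × X, G p.1 := key
    _ = ∑ g : ι → X, ∑ _x : X, G g := by rw [Fintype.sum_prod_type]
    _ = (Fintype.card X : ℝ) * ∑ g : ι → X, G g := by
        simp [Finset.sum_const, nsmul_eq_mul, Finset.mul_sum]

private lemma kernel_alg {α β : Type*} [Fintype α] [Fintype β]
    (w : α → ℝ) (u : β → ℝ) (hw : ∑ x, w x = 1) (hu : ∑ y, u y = 1)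
    (c q : ℝ) (rv : α → ℝ) (v : β → ℝ) :
    ∑ x, w x * ∑ y, u y * (c * (rv x + v y - q))
      = c * ((∑ x, w x * rv x) + (∑ y, u y * v y) - q) := by
  have h1 : ∀ x, ∑ y, u y * (c * (rv x + v y - q))
      = c * (rv x - q) + c * ∑ y, u y * v y := by
    intro x
    have h2 : ∀ y, u y * (c * (rv x + v y - q))
        = c * (rv x - q) * u y + c * (u y * v y) := fun y => by ring
    rw [Finset.sum_congr rfl fun y _ => h2 y, Finset.sum_add_distrib, ← Finset.mul_sum,
      hu, ← Finset.mul_sum, mul_one]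
  rw [show (∑ x, w x * ∑ y, u y * (c * (rv x + v y - q)))
      = ∑ x, w x * (c * (rv x - q) + c * ∑ y, u y * v y) from
    Finset.sum_congr rfl fun x _ => by rw [h1 x]]
  have h3 : ∀ x, w x * (c * (rv x - q) + c * ∑ y, u y * v y)
      = c * (w x * rv x) + (c * (∑ y, u y * v y) - c * q) * w x := fun x => by ring
  rw [Finset.sum_congr rfl fun x _ => h3 x, Finset.sum_add_distrib, ← Finset.mul_sum,
    ← Finset.mul_sum, hw, mul_one]
  ring

/-- A trajectory functional depending only on states up to time `k`, actions and
rewards before time `k`. -/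
def Adapted (k : ℕ) (χ : Traj S A R H → ℝ) : Prop :=
  ∀ (f f' : Fin (H + 2) → S) (g g' : Fin (H + 1) → A) (h h' : Fin (H + 1) → R),
    (∀ i : Fin (H + 2), (i : ℕ) ≤ k → f i = f' i) →
    (∀ t : Fin (H + 1), (t : ℕ) < k → g t = g' t) →
    (∀ t : Fin (H + 1), (t : ℕ) < k → h t = h' t) →
    χ (f, g, h) = χ (f', g', h')

lemma Adapted.mono {k k' : ℕ} {χ : Traj S A R H → ℝ} (hχ : Adapted k χ) (hkk : k ≤ k') :
    Adapted k' χ := fun f f' g g' h h' h1 h2 h3 =>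
  hχ f f' g g' h h' (fun i hi => h1 i (hi.trans hkk)) (fun t ht => h2 t (ht.trans_le hkk))
    (fun t ht => h3 t (ht.trans_le hkk))

lemma Adapted.update_f {k : ℕ} {χ : Traj S A R H → ℝ} (hχ : Adapted k χ)
    {i : Fin (H + 2)} (hi : k < (i : ℕ)) (f : Fin (H + 2) → S)
    (g : Fin (H + 1) → A) (h : Fin (H + 1) → R) (x : S) :
    χ (Function.update f i x, g, h) = χ (f, g, h) :=
  hχ _ f g g h h
    (fun i' hi' => Function.update_of_ne (Fin.ne_of_val_ne (by omega)) _ _)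
    (fun _ _ => rfl) (fun _ _ => rfl)

lemma Adapted.update_g {k : ℕ} {χ : Traj S A R H → ℝ} (hχ : Adapted k χ)
    {t₀ : Fin (H + 1)} (ht : k ≤ (t₀ : ℕ)) (f : Fin (H + 2) → S)
    (g : Fin (H + 1) → A) (h : Fin (H + 1) → R) (x : A) :
    χ (f, Function.update g t₀ x, h) = χ (f, g, h) :=
  hχ f f _ g h h (fun _ _ => rfl)
    (fun t' ht' => Function.update_of_ne (Fin.ne_of_val_ne (by omega)) _ _)
    (fun _ _ => rfl)

lemma Adapted.update_h {k : ℕ} {χ : Traj S A R H → ℝ} (hχ : Adapted k χ)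
    {t₀ : Fin (H + 1)} (ht : k ≤ (t₀ : ℕ)) (f : Fin (H + 2) → S)
    (g : Fin (H + 1) → A) (h : Fin (H + 1) → R) (x : R) :
    χ (f, g, Function.update h t₀ x) = χ (f, g, h) :=
  hχ f f g g _ h (fun _ _ => rfl) (fun _ _ => rfl)
    (fun t' ht' => Function.update_of_ne (Fin.ne_of_val_ne (by omega)) _ _)

private lemma sum_out_f {Y Z : Traj S A R H → ℝ} (i : Fin (H + 2))
    (hYZ : ∀ (f : Fin (H + 2) → S) (q : (Fin (H + 1) → A) × (Fin (H + 1) → R)),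
      ∑ x : S, Y (Function.update f i x, q) = Z (f, q)) :
    (Fintype.card S : ℝ) * ∑ T : Traj S A R H, Y T = ∑ T : Traj S A R H, Z T := by
  calc (Fintype.card S : ℝ) * ∑ T : Traj S A R H, Y T
      = ∑ q : (Fin (H + 1) → A) × (Fin (H + 1) → R), (Fintype.card S : ℝ) *
          ∑ f : Fin (H + 2) → S, Y (f, q) := by
        rw [Fintype.sum_prod_type, Finset.sum_comm, Finset.mul_sum]
    _ = ∑ q : (Fin (H + 1) → A) × (Fin (H + 1) → R), ∑ f : Fin (H + 2) → S, Z (f, q) := by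
        refine Finset.sum_congr rfl fun q _ => ?_
        rw [← sum_update_aux i (fun f => Y (f, q))]
        exact Finset.sum_congr rfl fun f _ => hYZ f q
    _ = ∑ T : Traj S A R H, Z T := by
        rw [show (∑ T : Traj S A R H, Z T)
            = ∑ f : Fin (H + 2) → S, ∑ q : (Fin (H + 1) → A) × (Fin (H + 1) → R), Z (f, q)
          from Fintype.sum_prod_type _]
        exact Finset.sum_comm

private lemma sum_out_g {Y Z : Traj S A R H → ℝ} (t₀ : Fin (H + 1))
    (hYZ : ∀ (f : Fin (H + 2) → S) (g : Fin (H + 1) → A) (h : Fin (H + 1) → R),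
      ∑ x : A, Y (f, Function.update g t₀ x, h) = Z (f, g, h)) :
    (Fintype.card A : ℝ) * ∑ T : Traj S A R H, Y T = ∑ T : Traj S A R H, Z T := by
  calc (Fintype.card A : ℝ) * ∑ T : Traj S A R H, Y T
      = ∑ f : Fin (H + 2) → S, ∑ h : Fin (H + 1) → R, (Fintype.card A : ℝ) *
          ∑ g : Fin (H + 1) → A, Y (f, g, h) := by
        rw [Fintype.sum_prod_type, Finset.mul_sum]
        refine Finset.sum_congr rfl fun f _ => ?_
        rw [Fintype.sum_prod_type, Finset.sum_comm, Finset.mul_sum]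
    _ = ∑ f : Fin (H + 2) → S, ∑ h : Fin (H + 1) → R, ∑ g : Fin (H + 1) → A, Z (f, g, h) := by
        refine Finset.sum_congr rfl fun f _ => Finset.sum_congr rfl fun h _ => ?_
        rw [← sum_update_aux t₀ (fun g => Y (f, g, h))]
        exact Finset.sum_congr rfl fun g _ => hYZ f g h
    _ = ∑ T : Traj S A R H, Z T := by
        rw [show (∑ T : Traj S A R H, Z T)
            = ∑ f : Fin (H + 2) → S, ∑ q : (Fin (H + 1) → A) × (Fin (H + 1) → R), Z (f, q)
          from Fintype.sum_prod_type _]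
        refine Finset.sum_congr rfl fun f _ => ?_
        rw [show (∑ q : (Fin (H + 1) → A) × (Fin (H + 1) → R), Z (f, q))
            = ∑ g : Fin (H + 1) → A, ∑ h : Fin (H + 1) → R, Z (f, g, h)
          from Fintype.sum_prod_type _]
        exact Finset.sum_comm

private lemma sum_out_h {Y Z : Traj S A R H → ℝ} (t₀ : Fin (H + 1))
    (hYZ : ∀ (f : Fin (H + 2) → S) (g : Fin (H + 1) → A) (h : Fin (H + 1) → R),
      ∑ x : R, Y (f, g, Function.update h t₀ x) = Z (f, g, h)) :
    (Fintype.card R : ℝ) * ∑ T : Traj S A R H, Y T = ∑ T : Traj S A R H, Z T := by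
  calc (Fintype.card R : ℝ) * ∑ T : Traj S A R H, Y T
      = ∑ f : Fin (H + 2) → S, ∑ g : Fin (H + 1) → A, (Fintype.card R : ℝ) *
          ∑ h : Fin (H + 1) → R, Y (f, g, h) := by
        rw [Fintype.sum_prod_type, Finset.mul_sum]
        refine Finset.sum_congr rfl fun f _ => ?_
        rw [Fintype.sum_prod_type, Finset.mul_sum]
    _ = ∑ f : Fin (H + 2) → S, ∑ g : Fin (H + 1) → A, ∑ h : Fin (H + 1) → R, Z (f, g, h) := by
        refine Finset.sum_congr rfl fun f _ => Finset.sum_congr rfl fun g _ => ?_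
        rw [← sum_update_aux t₀ (fun h => Y (f, g, h))]
        exact Finset.sum_congr rfl fun h _ => hYZ f g h
    _ = ∑ T : Traj S A R H, Z T := by
        rw [show (∑ T : Traj S A R H, Z T)
            = ∑ f : Fin (H + 2) → S, ∑ q : (Fin (H + 1) → A) × (Fin (H + 1) → R), Z (f, q)
          from Fintype.sum_prod_type _]
        exact Finset.sum_congr rfl fun f _ =>
          (Fintype.sum_prod_type
            (fun q : (Fin (H + 1) → A) × (Fin (H + 1) → R) => Z (f, q))).symm

private lemma sum_partition {I : Type*} [Fintype I] [DecidableEq I]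
    (p : Traj S A R H → ℝ) (X : Traj S A R H → I) (φ : I → ℝ) :
    ∑ T : Traj S A R H, p T * φ (X T)
      = ∑ i : I, (∑ T : Traj S A R H, if X T = i then p T else 0) * φ i := by
  calc ∑ T : Traj S A R H, p T * φ (X T)
      = ∑ T : Traj S A R H, ∑ i : I, if X T = i then p T * φ i else 0 := by
        refine Finset.sum_congr rfl fun T _ => ?_
        rw [Finset.sum_ite_eq Finset.univ (X T) (fun i => p T * φ i),
          if_pos (Finset.mem_univ _)]
    _ = ∑ i : I, ∑ T : Traj S A R H, if X T = i then p T * φ i else 0 := Finset.sum_comm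
    _ = ∑ i : I, (∑ T : Traj S A R H, if X T = i then p T else 0) * φ i := by
        refine Finset.sum_congr rfl fun i _ => ?_
        rw [Finset.sum_mul]
        exact Finset.sum_congr rfl fun T _ => by rw [ite_mul, zero_mul]

private lemma unpartition {I : Type*} [Fintype I] [DecidableEq I]
    (X : Traj S A R H → I) (w : Traj S A R H → ℝ) :
    ∑ i : I, ∑ T : Traj S A R H, (if X T = i then w T else 0)
      = ∑ T : Traj S A R H, w T := by
  rw [Finset.sum_comm]
  refine Finset.sum_congr rfl fun T _ => ?_
  rw [Finset.sum_ite_eq Finset.univ (X T) (fun _ => w T), if_pos (Finset.mem_univ _)]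

private lemma cexp_cancel (p : Traj S A R H → ℝ) (hp : ∀ T, 0 ≤ p T)
    (ev : Traj S A R H → Prop) [DecidablePred ev] (fR : Traj S A R H → ℝ) :
    (∑ T : Traj S A R H, if ev T then p T else 0) * cexp p ev fR
      = ∑ T : Traj S A R H, if ev T then p T * fR T else 0 := by
  have hbr : (∑ T : Traj S A R H, @ite ℝ (ev T) (Classical.propDecidable (ev T)) (p T) 0)
      = ∑ T : Traj S A R H, if ev T then p T else 0 :=
    Finset.sum_congr rfl fun T _ => by by_cases hT : ev T <;> simp [hT]
  have hbr2 : (∑ T : Traj S A R H,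
        @ite ℝ (ev T) (Classical.propDecidable (ev T)) (p T • fR T) 0)
      = ∑ T : Traj S A R H, if ev T then p T * fR T else 0 :=
    Finset.sum_congr rfl fun T _ => by by_cases hT : ev T <;> simp [hT]
  unfold cexp
  rw [hbr, hbr2]
  by_cases h0 : (∑ T : Traj S A R H, if ev T then p T else 0) = 0
  · rw [h0, zero_mul]
    have hz := (Finset.sum_eq_zero_iff_of_nonneg
      (fun T _ => by by_cases hT : ev T <;> simp [hT, hp T])).mp h0
    symm
    refine Finset.sum_eq_zero fun T _ => ?_
    by_cases hT : ev T
    · have := hz T (Finset.mem_univ T)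
      rw [if_pos hT] at this
      simp [hT, this]
    · simp [hT]
  · rw [smul_eq_mul, ← mul_assoc, mul_inv_cancel₀ h0, one_mul]

private lemma cumRew_succ (rv : R → ℝ) (j : Fin (H + 1)) (T : Traj S A R H) :
    cumRew rv (j : ℕ) T = rv (T.2.2 j) + cumRew rv ((j : ℕ) + 1) T := by
  unfold cumRew
  have h : ∀ k : Fin (H + 1), (if (j : ℕ) ≤ (k : ℕ) then rv (T.2.2 k) else 0)
      = (if k = j then rv (T.2.2 k) else 0) + (if (j : ℕ) + 1 ≤ (k : ℕ) then rv (T.2.2 k) else 0) := by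
    intro k
    by_cases h1 : k = j
    · subst h1; simp
    · have h2 : (k : ℕ) ≠ (j : ℕ) := fun hc => h1 (Fin.ext hc)
      rw [if_neg h1, zero_add]
      by_cases h3 : (j : ℕ) ≤ (k : ℕ)
      · rw [if_pos h3, if_pos (by omega)]
      · rw [if_neg h3, if_neg (by omega)]
  rw [Finset.sum_congr rfl fun k _ => h k, Finset.sum_add_distrib,
    Finset.sum_ite_eq' Finset.univ j (fun k => rv (T.2.2 k)), if_pos (Finset.mem_univ _)]

private lemma cumRew_top (rv : R → ℝ) (T : Traj S A R H) :
    cumRew rv (H + 1) T = 0 := by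
  unfold cumRew
  exact Finset.sum_eq_zero fun k _ => if_neg (by omega)

private lemma cumRew_zero (rv : R → ℝ) (T : Traj S A R H) :
    cumRew rv 0 T = ∑ t : Fin (H + 1), rv (T.2.2 t) := by
  unfold cumRew
  exact Finset.sum_congr rfl fun k _ => if_pos (Nat.zero_le _)

end DRAux


namespace Model

variable (M : Model S A R H D)

/-- One step factor of the trajectory density. -/
def stepF (pi : Fin (H + 1) → S → A → ℝ) (t : Fin (H + 1)) (T : Traj S A R H) : ℝ :=
  pi t (T.1 t.castSucc) (T.2.1 t) * M.prew t (T.1 t.castSucc) (T.2.1 t) (T.2.2 t) *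
    M.ptr t (T.1 t.castSucc) (T.2.1 t) (T.1 t.succ)

/-- The trajectory density truncated after `k` steps. -/
def truncP (pi : Fin (H + 1) → S → A → ℝ) (k : ℕ) (T : Traj S A R H) : ℝ :=
  M.p0 (T.1 0) * ∏ t : Fin (H + 1), if (t : ℕ) < k then M.stepF pi t T else 1

lemma stepF_apply (pi : Fin (H + 1) → S → A → ℝ) (t : Fin (H + 1))
    (f : Fin (H + 2) → S) (g : Fin (H + 1) → A) (h : Fin (H + 1) → R) :
    M.stepF pi t (f, g, h) = pi t (f t.castSucc) (g t) * M.prew t (f t.castSucc) (g t) (h t) *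
      M.ptr t (f t.castSucc) (g t) (f t.succ) := rfl

lemma truncP_apply (pi : Fin (H + 1) → S → A → ℝ) (k : ℕ)
    (f : Fin (H + 2) → S) (g : Fin (H + 1) → A) (h : Fin (H + 1) → R) :
    M.truncP pi k (f, g, h) = M.p0 (f 0) *
      ∏ t : Fin (H + 1), if (t : ℕ) < k then
        pi t (f t.castSucc) (g t) * M.prew t (f t.castSucc) (g t) (h t) *
          M.ptr t (f t.castSucc) (g t) (f t.succ) else 1 := rfl

lemma truncP_top (pi : Fin (H + 1) → S → A → ℝ) (T : Traj S A R H) :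
    M.truncP pi (H + 1) T = M.traj pi T := by
  unfold truncP traj stepF
  congr 1
  exact Finset.prod_congr rfl fun t _ => if_pos t.isLt

lemma truncP_succ (pi : Fin (H + 1) → S → A → ℝ) (j : Fin (H + 1)) (T : Traj S A R H) :
    M.truncP pi ((j : ℕ) + 1) T = M.truncP pi (j : ℕ) T * M.stepF pi j T := by
  unfold truncP
  have h : ∀ t : Fin (H + 1), (if (t : ℕ) < (j : ℕ) + 1 then M.stepF pi t T else 1)
      = (if (t : ℕ) < (j : ℕ) then M.stepF pi t T else 1) *
        (if t = j then M.stepF pi t T else 1) := by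
    intro t
    by_cases h1 : t = j
    · subst h1
      simp
    · have h2 : (t : ℕ) ≠ (j : ℕ) := fun hc => h1 (Fin.ext hc)
      rw [if_neg h1, mul_one]
      by_cases h3 : (t : ℕ) < (j : ℕ)
      · rw [if_pos (by omega), if_pos h3]
      · rw [if_neg (by omega), if_neg h3]
  rw [Finset.prod_congr rfl fun t _ => h t, Finset.prod_mul_distrib,
    Finset.prod_ite_eq' Finset.univ j (fun t => M.stepF pi t T), if_pos (Finset.mem_univ _),
    mul_assoc]

lemma truncP_update_f (pi : Fin (H + 1) → S → A → ℝ) (k : ℕ) {i : Fin (H + 2)}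
    (hi : k < (i : ℕ)) (f : Fin (H + 2) → S) (g : Fin (H + 1) → A) (h : Fin (H + 1) → R)
    (x : S) :
    M.truncP pi k (Function.update f i x, g, h) = M.truncP pi k (f, g, h) := by
  rw [truncP_apply, truncP_apply,
    Function.update_of_ne (Fin.ne_of_val_ne (i := (0 : Fin (H + 2)))
      (by simp only [Fin.val_zero]; omega)) x f]
  congr 1
  refine Finset.prod_congr rfl fun t _ => ?_
  by_cases ht : (t : ℕ) < k
  · rw [if_pos ht, if_pos ht,
      Function.update_of_ne (Fin.ne_of_val_ne (i := t.castSucc)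
        (by simp only [Fin.coe_castSucc]; omega)) x f,
      Function.update_of_ne (Fin.ne_of_val_ne (i := t.succ)
        (by simp only [Fin.val_succ]; omega)) x f]
  · rw [if_neg ht, if_neg ht]

lemma truncP_update_g (pi : Fin (H + 1) → S → A → ℝ) (k : ℕ) {t₀ : Fin (H + 1)}
    (ht₀ : k ≤ (t₀ : ℕ)) (f : Fin (H + 2) → S) (g : Fin (H + 1) → A) (h : Fin (H + 1) → R)
    (x : A) :
    M.truncP pi k (f, Function.update g t₀ x, h) = M.truncP pi k (f, g, h) := by
  rw [truncP_apply, truncP_apply]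
  congr 1
  refine Finset.prod_congr rfl fun t _ => ?_
  by_cases ht : (t : ℕ) < k
  · rw [if_pos ht, if_pos ht,
      Function.update_of_ne (Fin.ne_of_val_ne (i := t) (by omega)) x g]
  · rw [if_neg ht, if_neg ht]

lemma truncP_update_h (pi : Fin (H + 1) → S → A → ℝ) (k : ℕ) {t₀ : Fin (H + 1)}
    (ht₀ : k ≤ (t₀ : ℕ)) (f : Fin (H + 2) → S) (g : Fin (H + 1) → A) (h : Fin (H + 1) → R)
    (x : R) :
    M.truncP pi k (f, g, Function.update h t₀ x) = M.truncP pi k (f, g, h) := by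
  rw [truncP_apply, truncP_apply]
  congr 1
  refine Finset.prod_congr rfl fun t _ => ?_
  by_cases ht : (t : ℕ) < k
  · rw [if_pos ht, if_pos ht,
      Function.update_of_ne (Fin.ne_of_val_ne (i := t) (by omega)) x h]
  · rw [if_neg ht, if_neg ht]

lemma gdrop (pi : Fin (H + 1) → S → A → ℝ) (j : Fin (H + 1))
    (χ : Traj S A R H → ℝ) (hχ : Adapted (j : ℕ) χ) (ψ : S → A → R → S → ℝ) :
    (Fintype.card A * Fintype.card R * Fintype.card S : ℝ) *
      ∑ T : Traj S A R H, M.truncP pi ((j : ℕ) + 1) T * χ T *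
        ψ (T.1 j.castSucc) (T.2.1 j) (T.2.2 j) (T.1 j.succ)
    = ∑ T : Traj S A R H, M.truncP pi (j : ℕ) T * χ T *
        ∑ a, pi j (T.1 j.castSucc) a * ∑ r, M.prew j (T.1 j.castSucc) a r *
          ∑ s', M.ptr j (T.1 j.castSucc) a s' * ψ (T.1 j.castSucc) a r s' := by
  have hcs : (j.castSucc : ℕ) = (j : ℕ) := Fin.coe_castSucc j
  have hsc : (j.succ : ℕ) = (j : ℕ) + 1 := Fin.val_succ j
  have hA : (Fintype.card S : ℝ) *
      ∑ T : Traj S A R H, M.truncP pi ((j : ℕ) + 1) T * χ T *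
        ψ (T.1 j.castSucc) (T.2.1 j) (T.2.2 j) (T.1 j.succ)
      = ∑ T : Traj S A R H, M.truncP pi (j : ℕ) T * χ T *
          (pi j (T.1 j.castSucc) (T.2.1 j) * M.prew j (T.1 j.castSucc) (T.2.1 j) (T.2.2 j) *
            ∑ s', M.ptr j (T.1 j.castSucc) (T.2.1 j) s' *
              ψ (T.1 j.castSucc) (T.2.1 j) (T.2.2 j) s') := by
    refine sum_out_f j.succ ?_
    rintro f ⟨g, h⟩
    simp only []
    have e1 : ∀ x : S, Function.update f j.succ x j.castSucc = f j.castSucc :=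
      fun x => Function.update_of_ne (Fin.ne_of_val_ne (by omega)) _ _
    calc ∑ x : S, M.truncP pi ((j : ℕ) + 1) (Function.update f j.succ x, g, h) *
            χ (Function.update f j.succ x, g, h) *
            ψ (Function.update f j.succ x j.castSucc) (g j) (h j)
              (Function.update f j.succ x j.succ)
        = ∑ x : S, M.truncP pi (j : ℕ) (f, g, h) * χ (f, g, h) *
            (pi j (f j.castSucc) (g j) * M.prew j (f j.castSucc) (g j) (h j)) *
            (M.ptr j (f j.castSucc) (g j) x * ψ (f j.castSucc) (g j) (h j) x) := by
          refine Finset.sum_congr rfl fun x _ => ?_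
          rw [M.truncP_succ pi j, M.truncP_update_f pi (j : ℕ) (by omega) f g h x,
            M.stepF_apply, e1 x, Function.update_self,
            hχ.update_f (by omega) f g h x]
          ring
      _ = M.truncP pi (j : ℕ) (f, g, h) * χ (f, g, h) *
            (pi j (f j.castSucc) (g j) * M.prew j (f j.castSucc) (g j) (h j) *
              ∑ s', M.ptr j (f j.castSucc) (g j) s' * ψ (f j.castSucc) (g j) (h j) s') := by
          rw [← Finset.mul_sum]
          ring
  have hB : (Fintype.card R : ℝ) *
      ∑ T : Traj S A R H, M.truncP pi (j : ℕ) T * χ T *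
          (pi j (T.1 j.castSucc) (T.2.1 j) * M.prew j (T.1 j.castSucc) (T.2.1 j) (T.2.2 j) *
            ∑ s', M.ptr j (T.1 j.castSucc) (T.2.1 j) s' *
              ψ (T.1 j.castSucc) (T.2.1 j) (T.2.2 j) s')
      = ∑ T : Traj S A R H, M.truncP pi (j : ℕ) T * χ T *
          (pi j (T.1 j.castSucc) (T.2.1 j) *
            ∑ r, M.prew j (T.1 j.castSucc) (T.2.1 j) r *
              ∑ s', M.ptr j (T.1 j.castSucc) (T.2.1 j) s' *
                ψ (T.1 j.castSucc) (T.2.1 j) r s') := by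
    refine sum_out_h j ?_
    intro f g h
    simp only []
    calc ∑ x : R, M.truncP pi (j : ℕ) (f, g, Function.update h j x) *
            χ (f, g, Function.update h j x) *
            (pi j (f j.castSucc) (g j) * M.prew j (f j.castSucc) (g j) (Function.update h j x j) *
              ∑ s', M.ptr j (f j.castSucc) (g j) s' *
                ψ (f j.castSucc) (g j) (Function.update h j x j) s')
        = ∑ x : R, M.truncP pi (j : ℕ) (f, g, h) * χ (f, g, h) * pi j (f j.castSucc) (g j) *
            (M.prew j (f j.castSucc) (g j) x *
              ∑ s', M.ptr j (f j.castSucc) (g j) s' * ψ (f j.castSucc) (g j) x s') := by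
          refine Finset.sum_congr rfl fun x _ => ?_
          rw [M.truncP_update_h pi (j : ℕ) (by omega) f g h x,
            hχ.update_h (by omega) f g h x, Function.update_self]
          ring
      _ = M.truncP pi (j : ℕ) (f, g, h) * χ (f, g, h) *
            (pi j (f j.castSucc) (g j) *
              ∑ r, M.prew j (f j.castSucc) (g j) r *
                ∑ s', M.ptr j (f j.castSucc) (g j) s' * ψ (f j.castSucc) (g j) r s') := by
          rw [← Finset.mul_sum]
          ring
  have hC : (Fintype.card A : ℝ) *
      ∑ T : Traj S A R H, M.truncP pi (j : ℕ) T * χ T *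
          (pi j (T.1 j.castSucc) (T.2.1 j) *
            ∑ r, M.prew j (T.1 j.castSucc) (T.2.1 j) r *
              ∑ s', M.ptr j (T.1 j.castSucc) (T.2.1 j) s' *
                ψ (T.1 j.castSucc) (T.2.1 j) r s')
      = ∑ T : Traj S A R H, M.truncP pi (j : ℕ) T * χ T *
          ∑ a, pi j (T.1 j.castSucc) a * ∑ r, M.prew j (T.1 j.castSucc) a r *
            ∑ s', M.ptr j (T.1 j.castSucc) a s' * ψ (T.1 j.castSucc) a r s' := by
    refine sum_out_g j ?_
    intro f g h
    simp only []
    calc ∑ x : A, M.truncP pi (j : ℕ) (f, Function.update g j x, h) *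
            χ (f, Function.update g j x, h) *
            (pi j (f j.castSucc) (Function.update g j x j) *
              ∑ r, M.prew j (f j.castSucc) (Function.update g j x j) r *
                ∑ s', M.ptr j (f j.castSucc) (Function.update g j x j) s' *
                  ψ (f j.castSucc) (Function.update g j x j) r s')
        = ∑ x : A, M.truncP pi (j : ℕ) (f, g, h) * χ (f, g, h) *
            (pi j (f j.castSucc) x * ∑ r, M.prew j (f j.castSucc) x r *
              ∑ s', M.ptr j (f j.castSucc) x s' * ψ (f j.castSucc) x r s') := by
          refine Finset.sum_congr rfl fun x _ => ?_
          rw [M.truncP_update_g pi (j : ℕ) (by omega) f g h x,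
            hχ.update_g (by omega) f g h x, Function.update_self]
      _ = M.truncP pi (j : ℕ) (f, g, h) * χ (f, g, h) *
            ∑ a, pi j (f j.castSucc) a * ∑ r, M.prew j (f j.castSucc) a r *
              ∑ s', M.ptr j (f j.castSucc) a s' * ψ (f j.castSucc) a r s' := by
          rw [← Finset.mul_sum]
  linear_combination ((Fintype.card A : ℝ) * (Fintype.card R : ℝ)) * hA +
    (Fintype.card A : ℝ) * hB + hC


lemma drop (pi : Fin (H + 1) → S → A → ℝ) (hpisum : ∀ t s, ∑ a, pi t s a = 1)
    (hprew : ∀ t s a, ∑ r, M.prew t s a r = 1)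
    (hptr : ∀ t s a, ∑ s', M.ptr t s a s' = 1)
    (j : Fin (H + 1)) (χ : Traj S A R H → ℝ) (hχ : Adapted (j : ℕ) χ) :
    ∑ T : Traj S A R H, M.truncP pi (j : ℕ) T * χ T
      = (Fintype.card A * Fintype.card R * Fintype.card S : ℝ) *
          ∑ T : Traj S A R H, M.truncP pi ((j : ℕ) + 1) T * χ T := by
  have h := M.gdrop pi j χ hχ (fun _ _ _ _ => 1)
  simp only [mul_one] at h
  have hone : ∀ s : S, (∑ a, pi j s a * ∑ r, M.prew j s a r * ∑ s', M.ptr j s a s') = 1 := by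
    intro s
    simp only [hptr, mul_one, hprew]
    exact hpisum j s
  calc ∑ T : Traj S A R H, M.truncP pi (j : ℕ) T * χ T
      = ∑ T : Traj S A R H, M.truncP pi (j : ℕ) T * χ T *
          ∑ a, pi j (T.1 j.castSucc) a * ∑ r, M.prew j (T.1 j.castSucc) a r *
            ∑ s', M.ptr j (T.1 j.castSucc) a s' := by
        refine Finset.sum_congr rfl fun T _ => ?_
        rw [hone (T.1 j.castSucc), mul_one]
    _ = (Fintype.card A * Fintype.card R * Fintype.card S : ℝ) *
          ∑ T : Traj S A R H, M.truncP pi ((j : ℕ) + 1) T * χ T := h.symm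

lemma main_trunc (pi : Fin (H + 1) → S → A → ℝ) (hpisum : ∀ t s, ∑ a, pi t s a = 1)
    (hprew : ∀ t s a, ∑ r, M.prew t s a r = 1)
    (hptr : ∀ t s a, ∑ s', M.ptr t s a s' = 1) :
    ∀ (d k : ℕ), k + d = H + 1 → ∀ χ : Traj S A R H → ℝ, Adapted k χ →
      ∑ T : Traj S A R H, M.truncP pi k T * χ T
        = (Fintype.card A * Fintype.card R * Fintype.card S : ℝ) ^ d *
            ∑ T : Traj S A R H, M.traj pi T * χ T := by
  intro d
  induction d with
  | zero =>
      intro k hk χ _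
      obtain rfl : k = H + 1 := by omega
      rw [pow_zero, one_mul]
      exact Finset.sum_congr rfl fun T _ => by rw [M.truncP_top]
  | succ d ih =>
      intro k hk χ hχ
      have hkH : k < H + 1 := by omega
      have hdk : ∑ T : Traj S A R H, M.truncP pi k T * χ T
          = (Fintype.card A * Fintype.card R * Fintype.card S : ℝ) *
              ∑ T : Traj S A R H, M.truncP pi (k + 1) T * χ T :=
        M.drop pi hpisum hprew hptr ⟨k, hkH⟩ χ hχ
      rw [hdk, ih (k + 1) (by omega) χ (hχ.mono (Nat.le_succ k)), pow_succ]
      ring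

lemma step_expec (pi : Fin (H + 1) → S → A → ℝ) (hpisum : ∀ t s, ∑ a, pi t s a = 1)
    (hprew : ∀ t s a, ∑ r, M.prew t s a r = 1)
    (hptr : ∀ t s a, ∑ s', M.ptr t s a s' = 1)
    (hCne : (Fintype.card A * Fintype.card R * Fintype.card S : ℝ) ≠ 0)
    (j : Fin (H + 1)) (ψ : S → A → R → S → ℝ) :
    ∑ T : Traj S A R H, M.traj pi T * ψ (T.1 j.castSucc) (T.2.1 j) (T.2.2 j) (T.1 j.succ)
      = ∑ T : Traj S A R H, M.traj pi T *
          ∑ a, pi j (T.1 j.castSucc) a * ∑ r, M.prew j (T.1 j.castSucc) a r *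
            ∑ s', M.ptr j (T.1 j.castSucc) a s' * ψ (T.1 j.castSucc) a r s' := by
  have hjH : (j : ℕ) ≤ H := Fin.is_le j
  have had1 : Adapted ((j : ℕ) + 1)
      (fun T : Traj S A R H => ψ (T.1 j.castSucc) (T.2.1 j) (T.2.2 j) (T.1 j.succ)) := by
    intro f f' g g' h h' h1 h2 h3
    simp only []
    rw [h1 j.castSucc (by simp only [Fin.coe_castSucc]; omega),
      h1 j.succ (by simp only [Fin.val_succ]; omega), h2 j (by omega), h3 j (by omega)]
  have had0 : Adapted (j : ℕ)
      (fun T : Traj S A R H => ∑ a, pi j (T.1 j.castSucc) a *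
        ∑ r, M.prew j (T.1 j.castSucc) a r *
          ∑ s', M.ptr j (T.1 j.castSucc) a s' * ψ (T.1 j.castSucc) a r s') := by
    intro f f' g g' h h' h1 _ _
    simp only []
    rw [h1 j.castSucc (by simp only [Fin.coe_castSucc]; omega)]
  have h1 := M.main_trunc pi hpisum hprew hptr (H - (j : ℕ)) ((j : ℕ) + 1) (by omega) _ had1
  have h0 := M.main_trunc pi hpisum hprew hptr (H + 1 - (j : ℕ)) (j : ℕ) (by omega) _ had0
  have hg := M.gdrop pi j (fun _ => 1) (fun _ _ _ _ _ _ _ _ _ => rfl) ψ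
  simp only [mul_one, one_mul] at hg
  rw [h1, h0] at hg
  rw [show H + 1 - (j : ℕ) = (H - (j : ℕ)) + 1 by omega, pow_succ] at hg
  refine mul_left_cancel₀ (a := (Fintype.card A * Fintype.card R * Fintype.card S : ℝ) ^
    (H - (j : ℕ)) * (Fintype.card A * Fintype.card R * Fintype.card S : ℝ))
    (mul_ne_zero (pow_ne_zero _ hCne) hCne) ?_
  linear_combination hg

lemma traj_nonneg (hv : M.Valid) (pi : Fin (H + 1) → S → A → ℝ)
    (hpi : ∀ t s a, 0 ≤ pi t s a) (T : Traj S A R H) : 0 ≤ M.traj pi T :=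
  mul_nonneg (hv.p0_nonneg _) (Finset.prod_nonneg fun t _ =>
    mul_nonneg (mul_nonneg (hpi _ _ _) (hv.prew_nonneg _ _ _ _)) (hv.ptr_nonneg _ _ _ _))

lemma jointProb_traj (pi : Fin (H + 1) → S → A → ℝ) (hpisum : ∀ t s, ∑ a, pi t s a = 1)
    (hprew : ∀ t s a, ∑ r, M.prew t s a r = 1)
    (hptr : ∀ t s a, ∑ s', M.ptr t s a s' = 1)
    (hCne : (Fintype.card A * Fintype.card R * Fintype.card S : ℝ) ≠ 0)
    (j : Fin (H + 1)) (s : S) (a : A) :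
    jointProb (M.traj pi) j s a
      = (∑ T : Traj S A R H, if T.1 j.castSucc = s then M.traj pi T else 0) * pi j s a := by
  have h := M.step_expec pi hpisum hprew hptr hCne j
    (fun s₀ a₀ _ _ => if s₀ = s ∧ a₀ = a then (1 : ℝ) else 0)
  have hR : ∀ T : Traj S A R H, (∑ a₀, pi j (T.1 j.castSucc) a₀ *
      ∑ r, M.prew j (T.1 j.castSucc) a₀ r *
        ∑ s', M.ptr j (T.1 j.castSucc) a₀ s' *
          (if T.1 j.castSucc = s ∧ a₀ = a then (1 : ℝ) else 0))
      = if T.1 j.castSucc = s then pi j s a else 0 := by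
    intro T
    by_cases hs : T.1 j.castSucc = s
    · rw [if_pos hs]
      have hper : ∀ a₀, pi j (T.1 j.castSucc) a₀ * ∑ r, M.prew j (T.1 j.castSucc) a₀ r *
          ∑ s', M.ptr j (T.1 j.castSucc) a₀ s' *
            (if T.1 j.castSucc = s ∧ a₀ = a then (1 : ℝ) else 0)
          = if a₀ = a then pi j s a₀ else 0 := by
        intro a₀
        by_cases ha : a₀ = a
        · subst ha
          simp [hs, hptr, hprew]
        · simp [ha]
      rw [Finset.sum_congr rfl fun a₀ _ => hper a₀,
        Finset.sum_ite_eq' Finset.univ a (fun a₀ => pi j s a₀), if_pos (Finset.mem_univ _)]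
    · simp [hs]
  calc jointProb (M.traj pi) j s a
      = ∑ T : Traj S A R H, M.traj pi T *
          (if T.1 j.castSucc = s ∧ T.2.1 j = a then (1 : ℝ) else 0) := by
        unfold jointProb
        refine Finset.sum_congr rfl fun T _ => ?_
        by_cases hT : T.1 j.castSucc = s ∧ T.2.1 j = a <;> simp [hT]
    _ = ∑ T : Traj S A R H, M.traj pi T * (if T.1 j.castSucc = s then pi j s a else 0) := by
        rw [h]
        exact Finset.sum_congr rfl fun T _ => by rw [hR T]
    _ = (∑ T : Traj S A R H, if T.1 j.castSucc = s then M.traj pi T else 0) * pi j s a := by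
        rw [Finset.sum_mul]
        refine Finset.sum_congr rfl fun T _ => ?_
        by_cases hs : T.1 j.castSucc = s <;> simp [hs]

lemma qfun_tower (θ : Param D) (hpe : ∀ T, 0 ≤ M.pe θ T) (j : Fin (H + 1)) :
    ∑ T : Traj S A R H, M.pe θ T * M.qfun θ j (T.1 j.castSucc) (T.2.1 j)
      = ∑ T : Traj S A R H, M.pe θ T * cumRew M.rval (j : ℕ) T := by
  have hp := sum_partition (M.pe θ) (fun T => (T.1 j.castSucc, T.2.1 j))
    (fun sa => M.qfun θ j sa.1 sa.2)
  simp only [] at hp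
  rw [hp]
  have hper : ∀ sa : S × A,
      (∑ T : Traj S A R H, if (T.1 j.castSucc, T.2.1 j) = sa then M.pe θ T else 0) *
        M.qfun θ j sa.1 sa.2
      = ∑ T : Traj S A R H, if (T.1 j.castSucc, T.2.1 j) = sa
          then M.pe θ T * cumRew M.rval (j : ℕ) T else 0 := by
    rintro ⟨s, a⟩
    simp only []
    have hc := cexp_cancel (M.pe θ) hpe (fun T => T.1 j.castSucc = s ∧ T.2.1 j = a)
      (cumRew M.rval (j : ℕ))
    have e1 : (∑ T : Traj S A R H, if (T.1 j.castSucc, T.2.1 j) = (s, a)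
        then M.pe θ T else 0)
        = ∑ T : Traj S A R H, if T.1 j.castSucc = s ∧ T.2.1 j = a then M.pe θ T else 0 :=
      Finset.sum_congr rfl fun T _ =>
        if_congr (by simp [Prod.ext_iff]) rfl rfl
    have e2 : (∑ T : Traj S A R H, if (T.1 j.castSucc, T.2.1 j) = (s, a)
        then M.pe θ T * cumRew M.rval (j : ℕ) T else 0)
        = ∑ T : Traj S A R H, if T.1 j.castSucc = s ∧ T.2.1 j = a
            then M.pe θ T * cumRew M.rval (j : ℕ) T else 0 :=
      Finset.sum_congr rfl fun T _ =>
        if_congr (by simp [Prod.ext_iff]) rfl rfl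
    rw [e1, e2,
      show M.qfun θ j s a = cexp (M.pe θ) (fun T => T.1 j.castSucc = s ∧ T.2.1 j = a)
        (cumRew M.rval (j : ℕ)) from rfl]
    exact hc
  rw [Finset.sum_congr rfl fun sa _ => hper sa,
    unpartition (fun T : Traj S A R H => (T.1 j.castSucc, T.2.1 j))
      (fun T => M.pe θ T * cumRew M.rval (j : ℕ) T)]

lemma vfun_tower (θ : Param D) (hpe : ∀ T, 0 ≤ M.pe θ T) (k : Fin (H + 2)) :
    ∑ T : Traj S A R H, M.pe θ T * M.vfun θ k (T.1 k)
      = ∑ T : Traj S A R H, M.pe θ T * cumRew M.rval (k : ℕ) T := by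
  by_cases hk : (k : ℕ) ≤ H
  · have hp := sum_partition (M.pe θ) (fun T => T.1 k) (fun s => M.vfun θ k s)
    rw [hp]
    have hper : ∀ s : S,
        (∑ T : Traj S A R H, if T.1 k = s then M.pe θ T else 0) * M.vfun θ k s
        = ∑ T : Traj S A R H, if T.1 k = s then M.pe θ T * cumRew M.rval (k : ℕ) T else 0 := by
      intro s
      have hvs : M.vfun θ k s = cexp (M.pe θ) (fun T => T.1 k = s) (cumRew M.rval (k : ℕ)) := by
        unfold vfun
        rw [if_pos hk]
      rw [hvs]
      exact cexp_cancel (M.pe θ) hpe (fun T => T.1 k = s) (cumRew M.rval (k : ℕ))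
    rw [Finset.sum_congr rfl fun s _ => hper s,
      unpartition (fun T : Traj S A R H => T.1 k)
        (fun T => M.pe θ T * cumRew M.rval (k : ℕ) T)]
  · have hk1 : (k : ℕ) = H + 1 := by omega
    have hv0 : ∀ s, M.vfun θ k s = 0 := by
      intro s
      unfold vfun
      rw [if_neg hk]
    have hc0 : ∀ T : Traj S A R H, cumRew M.rval (k : ℕ) T = 0 := by
      intro T
      rw [hk1]
      exact cumRew_top M.rval T
    simp [hv0, hc0]

lemma init_marg (pi pi' : Fin (H + 1) → S → A → ℝ)
    (hpisum : ∀ t s, ∑ a, pi t s a = 1) (hpisum' : ∀ t s, ∑ a, pi' t s a = 1)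
    (hprew : ∀ t s a, ∑ r, M.prew t s a r = 1)
    (hptr : ∀ t s a, ∑ s', M.ptr t s a s' = 1)
    (hCne : (Fintype.card A * Fintype.card R * Fintype.card S : ℝ) ≠ 0) (s : S) :
    (∑ T : Traj S A R H, if T.1 0 = s then M.traj pi T else 0)
      = ∑ T : Traj S A R H, if T.1 0 = s then M.traj pi' T else 0 := by
  have had : Adapted 0 (fun T : Traj S A R H => if T.1 0 = s then (1 : ℝ) else 0) := by
    intro f f' g g' h h' h1 _ _
    simp only []
    exact if_congr (by rw [h1 0 (by simp)]) rfl rfl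
  have h1 := M.main_trunc pi hpisum hprew hptr (H + 1) 0 (by omega) _ had
  have h2 := M.main_trunc pi' hpisum' hprew hptr (H + 1) 0 (by omega) _ had
  have h0 : ∀ (pj : Fin (H + 1) → S → A → ℝ) (T : Traj S A R H),
      M.truncP pj 0 T = M.p0 (T.1 0) := by
    intro pj T
    unfold truncP
    have hpr : (∏ t : Fin (H + 1), if (t : ℕ) < 0 then M.stepF pj t T else 1) = 1 :=
      Finset.prod_eq_one fun t _ => if_neg (by omega)
    rw [hpr, mul_one]
  have e : ∑ T : Traj S A R H, M.truncP pi 0 T * (if T.1 0 = s then (1 : ℝ) else 0)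
      = ∑ T : Traj S A R H, M.truncP pi' 0 T * (if T.1 0 = s then (1 : ℝ) else 0) :=
    Finset.sum_congr rfl fun T _ => by rw [h0 pi T, h0 pi' T]
  have e3 := (h1.symm.trans e).trans h2
  have e2 := mul_left_cancel₀ (pow_ne_zero _ hCne) e3
  calc (∑ T : Traj S A R H, if T.1 0 = s then M.traj pi T else 0)
      = ∑ T : Traj S A R H, M.traj pi T * (if T.1 0 = s then (1 : ℝ) else 0) :=
        Finset.sum_congr rfl fun T _ => by by_cases hT : T.1 0 = s <;> simp [hT]
    _ = ∑ T : Traj S A R H, M.traj pi' T * (if T.1 0 = s then (1 : ℝ) else 0) := e2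
    _ = ∑ T : Traj S A R H, if T.1 0 = s then M.traj pi' T else 0 :=
        Finset.sum_congr rfl fun T _ => by by_cases hT : T.1 0 = s <;> simp [hT]


lemma term_j (hv : M.Valid) (θ : Param D)
    (hCne : (Fintype.card A * Fintype.card R * Fintype.card S : ℝ) ≠ 0) (j : Fin (H + 1)) :
    ∑ T : Traj S A R H, M.pb T *
      (M.mufun θ j (T.1 j.castSucc) (T.2.1 j) *
        (M.rval (T.2.2 j) + M.vfun θ j.succ (T.1 j.succ) -
          M.qfun θ j (T.1 j.castSucc) (T.2.1 j))) = 0 := by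
  have hpe : ∀ T, 0 ≤ M.pe θ T := fun T =>
    M.traj_nonneg hv (M.pit θ) (fun t s a => (hv.pit_pos θ t s a).le) T
  have hse_b := M.step_expec M.pib hv.pib_sum hv.prew_sum hv.ptr_sum hCne j
    (fun s a r s' => M.mufun θ j s a *
      (M.rval r + M.vfun θ j.succ s' - M.qfun θ j s a))
  rw [show M.traj M.pib = M.pb from rfl] at hse_b
  have hse_e := M.step_expec (M.pit θ) (hv.pit_sum θ) hv.prew_sum hv.ptr_sum hCne j
    (fun s a r s' => (1 : ℝ) * (M.rval r + M.vfun θ j.succ s' - M.qfun θ j s a))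
  rw [show M.traj (M.pit θ) = M.pe θ from rfl] at hse_e
  have hp_b := sum_partition M.pb (fun T => T.1 j.castSucc)
    (fun s => ∑ a, M.pib j s a * ∑ r, M.prew j s a r *
      ∑ s', M.ptr j s a s' * (M.mufun θ j s a *
        (M.rval r + M.vfun θ j.succ s' - M.qfun θ j s a)))
  have hp_e := sum_partition (M.pe θ) (fun T => T.1 j.castSucc)
    (fun s => ∑ a, M.pit θ j s a * ∑ r, M.prew j s a r *
      ∑ s', M.ptr j s a s' * ((1 : ℝ) *
        (M.rval r + M.vfun θ j.succ s' - M.qfun θ j s a)))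
  have hmid : ∑ s : S, (∑ T : Traj S A R H, if T.1 j.castSucc = s then M.pb T else 0) *
        ∑ a, M.pib j s a * ∑ r, M.prew j s a r *
          ∑ s', M.ptr j s a s' * (M.mufun θ j s a *
            (M.rval r + M.vfun θ j.succ s' - M.qfun θ j s a))
      = ∑ s : S, (∑ T : Traj S A R H, if T.1 j.castSucc = s then M.pe θ T else 0) *
          ∑ a, M.pit θ j s a * ∑ r, M.prew j s a r *
            ∑ s', M.ptr j s a s' * ((1 : ℝ) *
              (M.rval r + M.vfun θ j.succ s' - M.qfun θ j s a)) := by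
    refine Finset.sum_congr rfl fun s _ => ?_
    have hkb : ∀ a : A, (∑ r, M.prew j s a r * ∑ s', M.ptr j s a s' * (M.mufun θ j s a *
          (M.rval r + M.vfun θ j.succ s' - M.qfun θ j s a)))
        = M.mufun θ j s a * ((∑ r, M.prew j s a r * M.rval r) +
            (∑ s', M.ptr j s a s' * M.vfun θ j.succ s') - M.qfun θ j s a) := fun a =>
      kernel_alg (M.prew j s a) (M.ptr j s a) (hv.prew_sum j s a) (hv.ptr_sum j s a) _ _ _ _
    have hke : ∀ a : A, (∑ r, M.prew j s a r * ∑ s', M.ptr j s a s' * ((1 : ℝ) *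
          (M.rval r + M.vfun θ j.succ s' - M.qfun θ j s a)))
        = (1 : ℝ) * ((∑ r, M.prew j s a r * M.rval r) +
            (∑ s', M.ptr j s a s' * M.vfun θ j.succ s') - M.qfun θ j s a) := fun a =>
      kernel_alg (M.prew j s a) (M.ptr j s a) (hv.prew_sum j s a) (hv.ptr_sum j s a) _ _ _ _
    simp only [hkb, hke]
    rw [Finset.mul_sum, Finset.mul_sum]
    refine Finset.sum_congr rfl fun a _ => ?_
    have hjb : jointProb M.pb j s a
        = (∑ T : Traj S A R H, if T.1 j.castSucc = s then M.pb T else 0) * M.pib j s a :=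
      M.jointProb_traj M.pib hv.pib_sum hv.prew_sum hv.ptr_sum hCne j s a
    have hje : jointProb (M.pe θ) j s a
        = (∑ T : Traj S A R H, if T.1 j.castSucc = s then M.pe θ T else 0) * M.pit θ j s a :=
      M.jointProb_traj (M.pit θ) (hv.pit_sum θ) hv.prew_sum hv.ptr_sum hCne j s a
    have hbne : jointProb M.pb j s a ≠ 0 := ne_of_gt (hv.pb_marg_pos j s a)
    have h3 : jointProb M.pb j s a * M.mufun θ j s a = jointProb (M.pe θ) j s a := by
      rw [show M.mufun θ j s a
        = jointProb (M.pe θ) j s a / jointProb M.pb j s a from rfl]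
      field_simp
    linear_combination (-(M.mufun θ j s a * ((∑ r, M.prew j s a r * M.rval r) +
        (∑ s', M.ptr j s a s' * M.vfun θ j.succ s') - M.qfun θ j s a))) * hjb +
      ((∑ r, M.prew j s a r * M.rval r) +
        (∑ s', M.ptr j s a s' * M.vfun θ j.succ s') - M.qfun θ j s a) * h3 +
      ((∑ r, M.prew j s a r * M.rval r) +
        (∑ s', M.ptr j s a s' * M.vfun θ j.succ s') - M.qfun θ j s a) * hje
  rw [hse_b, hp_b, hmid, ← hp_e, ← hse_e]
  have hq := M.qfun_tower θ hpe j
  have hvt := M.vfun_tower θ hpe j.succ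
  rw [show ((j.succ : Fin (H + 2)) : ℕ) = (j : ℕ) + 1 from Fin.val_succ j] at hvt
  have hx : ∀ T : Traj S A R H, M.pe θ T * ((1 : ℝ) *
      (M.rval (T.2.2 j) + M.vfun θ j.succ (T.1 j.succ) -
        M.qfun θ j (T.1 j.castSucc) (T.2.1 j)))
      = (M.pe θ T * M.rval (T.2.2 j) + M.pe θ T * M.vfun θ j.succ (T.1 j.succ))
        - M.pe θ T * M.qfun θ j (T.1 j.castSucc) (T.2.1 j) := fun T => by ring
  rw [Finset.sum_congr rfl fun T _ => hx T, Finset.sum_sub_distrib, Finset.sum_add_distrib,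
    hq, hvt]
  have hy : ∀ T : Traj S A R H,
      M.pe θ T * M.rval (T.2.2 j) + M.pe θ T * cumRew M.rval ((j : ℕ) + 1) T
      = M.pe θ T * cumRew M.rval (j : ℕ) T := fun T => by
    rw [cumRew_succ M.rval j T]
    ring
  rw [← Finset.sum_add_distrib, Finset.sum_congr rfl fun T _ => hy T, sub_self]


end Model

/-- Unbiasedness of the doubly robust off-policy evaluation influence
function in MDPs: `E_{p_{π^b}}[v_0(s_0) + ∑_{j=0}^H μ_j(s_j,a_j)(r_j + v_{j+1}(s_{j+1})
 − q_j(s_j,a_j))] = J(θ)` with `v_{H+1} ≡ 0`. -/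
theorem dr_ope_unbiased (M : Model S A R H D) (θ : Param D)
    (hvalid : M.Valid) :
    expec M.pb (fun T =>
      M.vfun θ 0 (T.1 0) +
        ∑ j : Fin (H + 1),
          M.mufun θ j (T.1 j.castSucc) (T.2.1 j) *
            (M.rval (T.2.2 j) + M.vfun θ j.succ (T.1 j.succ) -
              M.qfun θ j (T.1 j.castSucc) (T.2.1 j))) = M.Jval θ := by
  have hS : Nonempty S := by
    by_contra hS
    rw [not_nonempty_iff] at hS
    have h := hvalid.p0_sum
    rw [Finset.univ_eq_empty, Finset.sum_empty] at h
    exact zero_ne_one h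
  obtain ⟨s0⟩ := hS
  have hA : Nonempty A := by
    by_contra hA
    rw [not_nonempty_iff] at hA
    have h := hvalid.pib_sum 0 s0
    rw [Finset.univ_eq_empty, Finset.sum_empty] at h
    exact zero_ne_one h
  obtain ⟨a0⟩ := hA
  have hR : Nonempty R := by
    by_contra hR
    rw [not_nonempty_iff] at hR
    have h := hvalid.prew_sum 0 s0 a0
    rw [Finset.univ_eq_empty, Finset.sum_empty] at h
    exact zero_ne_one h
  have hCne : (Fintype.card A * Fintype.card R * Fintype.card S : ℝ) ≠ 0 := by
    have h1 : (0 : ℝ) < Fintype.card A := by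
      exact_mod_cast Fintype.card_pos_iff.mpr ⟨a0⟩
    have h2 : (0 : ℝ) < Fintype.card R := by
      exact_mod_cast Fintype.card_pos_iff.mpr hR
    have h3 : (0 : ℝ) < Fintype.card S := by
      exact_mod_cast Fintype.card_pos_iff.mpr ⟨s0⟩
    positivity
  have hpe : ∀ T, 0 ≤ M.pe θ T := fun T =>
    M.traj_nonneg hvalid (M.pit θ) (fun t s a => (hvalid.pit_pos θ t s a).le) T
  unfold expec
  simp only [smul_eq_mul]
  have hsplit : ∀ T : Traj S A R H,
      M.pb T * (M.vfun θ 0 (T.1 0) +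
        ∑ j : Fin (H + 1), M.mufun θ j (T.1 j.castSucc) (T.2.1 j) *
          (M.rval (T.2.2 j) + M.vfun θ j.succ (T.1 j.succ) -
            M.qfun θ j (T.1 j.castSucc) (T.2.1 j)))
      = M.pb T * M.vfun θ 0 (T.1 0) +
        ∑ j : Fin (H + 1), M.pb T * (M.mufun θ j (T.1 j.castSucc) (T.2.1 j) *
          (M.rval (T.2.2 j) + M.vfun θ j.succ (T.1 j.succ) -
            M.qfun θ j (T.1 j.castSucc) (T.2.1 j))) := by
    intro T
    rw [mul_add, Finset.mul_sum]
  rw [Finset.sum_congr rfl fun T _ => hsplit T, Finset.sum_add_distrib, Finset.sum_comm,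
    Finset.sum_congr rfl fun j (_ : j ∈ Finset.univ) => M.term_j hvalid θ hCne j,
    Finset.sum_const_zero, add_zero]
  -- initial-state term equals J(θ)
  have hp_b := sum_partition M.pb (fun T => T.1 0) (fun s => M.vfun θ 0 s)
  have hp_e := sum_partition (M.pe θ) (fun T => T.1 0) (fun s => M.vfun θ 0 s)
  have hmarg : ∀ s : S, (∑ T : Traj S A R H, if T.1 0 = s then M.pb T else 0)
      = ∑ T : Traj S A R H, if T.1 0 = s then M.pe θ T else 0 := fun s =>
    M.init_marg M.pib (M.pit θ) hvalid.pib_sum (hvalid.pit_sum θ)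
      hvalid.prew_sum hvalid.ptr_sum hCne s
  rw [hp_b, Finset.sum_congr rfl fun s _ => by rw [hmarg s], ← hp_e]
  have hvt := M.vfun_tower θ hpe 0
  rw [show (((0 : Fin (H + 2))) : ℕ) = 0 from rfl] at hvt
  rw [hvt]
  unfold Model.Jval expec
  simp only [smul_eq_mul]
  refine Finset.sum_congr rfl fun T _ => ?_
  rw [cumRew_zero]


end OPPG
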